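/- Let P ∈ M₂(ℝ), let γ ∈ M₂(ℝ) be symmetric, and suppose there exists b ∈ ℝ such that P γ Pᵀ = (det P) · b · I₂. Then for all Z, W ∈ M₂(ℝ), ( (Pᵀ Z)(γ Pᵀ W)ᵀ (Pᵀ J P) )^sym = (det P) · Pᵀ ( b · Z Wᵀ J )^sym P. -/
import Mathlib


open Matrix

/-- The rotation matrix `J = e₂⊗e₁ − e₁⊗e₂`, i.e. `Jv = (−v₂, v₁)`. -/
def J2 : Matrix (Fin 2) (Fin 2) ℝ := !![0, -1; 1, 0]

/-- The symmetric part `(A + Aᵀ)/2` of a matrix. -/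
noncomputable def symPart (A : Matrix (Fin 2) (Fin 2) ℝ) : Matrix (Fin 2) (Fin 2) ℝ :=
  (2 : ℝ)⁻¹ • (A + Aᵀ)

/-- Transformation by congruence of the constraint matrices under a change of variables whose
Jacobian `P` pushes the symmetric matrix `γ` to a multiple of the identity:
`((PᵀZ)(γPᵀW)ᵀ(PᵀJP))^sym = (det P) · Pᵀ (b·ZWᵀJ)^sym P`. -/
theorem stmt19 (P γ : Matrix (Fin 2) (Fin 2) ℝ) (hγ : γ.IsSymm) (b : ℝ)
    (hP : P * γ * Pᵀ = (P.det * b) • (1 : Matrix (Fin 2) (Fin 2) ℝ)) :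
    ∀ Z W : Matrix (Fin 2) (Fin 2) ℝ,
      symPart ((Pᵀ * Z) * (γ * Pᵀ * W)ᵀ * (Pᵀ * J2 * P)) =
        P.det • (Pᵀ * symPart (b • (Z * Wᵀ * J2)) * P) := by
  intro Z W
  have hγ' : γᵀ = γ := hγ
  have key : (Pᵀ * Z) * (γ * Pᵀ * W)ᵀ * (Pᵀ * J2 * P)
      = (P.det * b) • (Pᵀ * (Z * Wᵀ * J2) * P) := by
    have h1 : (γ * Pᵀ * W)ᵀ = Wᵀ * P * γ := by
      simp [Matrix.transpose_mul, hγ', Matrix.mul_assoc]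
    rw [h1]
    calc (Pᵀ * Z) * (Wᵀ * P * γ) * (Pᵀ * J2 * P)
        = Pᵀ * Z * Wᵀ * (P * γ * Pᵀ) * (J2 * P) := by
          simp only [Matrix.mul_assoc]
      _ = (P.det * b) • (Pᵀ * (Z * Wᵀ * J2) * P) := by
          rw [hP]
          simp only [Matrix.mul_smul, Matrix.smul_mul, Matrix.one_mul, Matrix.mul_one,
            Matrix.mul_assoc]
  rw [key]
  have hsmul : ∀ (c : ℝ) (A : Matrix (Fin 2) (Fin 2) ℝ), symPart (c • A) = c • symPart A := by
    intro c A
    simp [symPart, smul_add, smul_comm c]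
  have hcong : ∀ A : Matrix (Fin 2) (Fin 2) ℝ,
      symPart (Pᵀ * A * P) = Pᵀ * symPart A * P := by
    intro A
    simp [symPart, Matrix.mul_add, Matrix.add_mul, Matrix.mul_smul, Matrix.smul_mul,
      Matrix.mul_assoc]
  rw [hsmul, hcong, hsmul, Matrix.mul_smul, Matrix.smul_mul, smul_smul]
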